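/- Let k ∈ ℕ, let U be a unitary operator on H of class C^k(A), and let Φ be a function of class C^{k+2} on the unit circle (i.e. φ(θ) := Φ(e^{iθ}) is a 2π-periodic C^{k+2} function of θ ∈ ℝ), with Fourier coefficients φ̂_m = (1/2π) ∫_0^{2π} Φ(e^{iθ}) e^{−imθ} dθ. Then the series Σ_{m∈ℤ} φ̂_m U^m converges in operator norm, its sum Φ(U) belongs to C^k(A), and for all j ∈ {0,…,k}, ad_A^j(Φ(U)) = Σ_{m∈ℤ} φ̂_m ad_A^j(U^m), the series converging in operator norm. -/

import Mathlib

/-!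
The Leibniz rule `[A, BC] = [A, B] C + B [A, C]` holds for `B, C ∈ C^1(A)` because an operator
whose commutator form is bounded maps `D(A)` into itself (`A` being self-adjoint). Iterating it,
together with `[A, U*] = -[A, U]*`, gives `‖ad_A^j (U^m)‖ ≤ (|m| M)^j` for `j ≤ k` and all `m ∈ ℤ`.
Integrating by parts `j + 2` times gives `|φ̂_m| |m|^(j+2) ≤ K_j`, so `Σ φ̂_m ad_A^j (U^m)`
converges absolutely. Commutator forms pass to norm-convergent sums, and iterated commutators are
unique since `D(A)` is dense.
-/

variable {H : Type} [NormedAddCommGroup H] [InnerProductSpace ℂ H] [CompleteSpace H]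

/-- `C` is the bounded operator representing the commutator form
`F(φ,ψ) = ⟨Aφ, Bψ⟩ − ⟨φ, BAψ⟩` on `D(A) × D(A)`. -/
def IsCommutatorOf (A : H →ₗ.[ℂ] H) (B C : H →L[ℂ] H) : Prop :=
  ∀ x y : A.domain,
    (inner ℂ (A x) (B (y : H)) : ℂ) - inner ℂ (x : H) (B (A y)) = inner ℂ (x : H) (C (y : H))

/-- `D` is a chain of iterated commutators for `B` of length `k`; its existence means
`B ∈ C^k(A)` and `ad_A^j B = D j`. -/
def IsAdChain (A : H →ₗ.[ℂ] H) (B : H →L[ℂ] H) (D : ℕ → H →L[ℂ] H) (k : ℕ) : Prop :=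
  D 0 = B ∧ ∀ j < k, IsCommutatorOf A (D j) (D (j + 1))


open Finset

section Commutator

variable {E : Type} [NormedAddCommGroup E] [InnerProductSpace ℂ E] {A : E →ₗ.[ℂ] E}

theorem IsSelfAdjoint.inner_map_eq [CompleteSpace E] (hA : IsSelfAdjoint A) (x y : A.domain) :
    inner ℂ (A x) (y : E) = inner ℂ (x : E) (A y) := by
  have h := LinearPMap.adjoint_isFormalAdjoint hA.dense_domain (T := A)
  rw [show A.adjoint = A from hA] at h
  exact h x y

theorem IsSelfAdjoint.exists_mem_domain_apply_eq [CompleteSpace E] (hA : IsSelfAdjoint A)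
    {z w : E} (h : ∀ x : A.domain, inner ℂ (A x) z = inner ℂ (x : E) w) :
    ∃ hz : z ∈ A.domain, A ⟨z, hz⟩ = w := by
  have h' : ∀ x : A.domain, inner ℂ w (x : E) = inner ℂ z (A x) := fun x => by
    rw [← inner_conj_symm, ← h x, inner_conj_symm]
  have hz : z ∈ A.adjoint.domain := LinearPMap.mem_adjoint_domain_of_exists z ⟨w, h'⟩
  have hAz : A.adjoint ⟨z, hz⟩ = w := LinearPMap.adjoint_apply_eq hA.dense_domain _ h'
  rw [← show A.adjoint = A from hA]
  exact ⟨hz, hAz⟩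

namespace IsCommutatorOf

variable {B C B₁ C₁ : E →L[ℂ] E}

theorem zero : IsCommutatorOf A 0 0 := fun x y => by simp

theorem one [CompleteSpace E] (hA : IsSelfAdjoint A) : IsCommutatorOf A 1 0 := fun x y => by
  simp [hA.inner_map_eq x y]

theorem add (hB : IsCommutatorOf A B B₁) (hC : IsCommutatorOf A C C₁) :
    IsCommutatorOf A (B + C) (B₁ + C₁) := fun x y => by
  simp only [add_apply, inner_add_right, ← hB x y, ← hC x y]
  ring

theorem smul (h : IsCommutatorOf A B C) (a : ℂ) : IsCommutatorOf A (a • B) (a • C) :=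
  fun x y => by
  simp only [smul_apply, inner_smul_right, ← h x y]
  ring

theorem nsmul (h : IsCommutatorOf A B C) (n : ℕ) : IsCommutatorOf A (n • B) (n • C) := by
  simpa only [Nat.cast_smul_eq_nsmul] using h.smul (n : ℂ)

theorem sum {ι : Type*} {s : Finset ι} {F G : ι → E →L[ℂ] E}
    (h : ∀ i ∈ s, IsCommutatorOf A (F i) (G i)) :
    IsCommutatorOf A (∑ i ∈ s, F i) (∑ i ∈ s, G i) := by
  classical
  induction s using Finset.induction_on with
  | empty => simpa using zero
  | insert i s hi ih =>
    rw [sum_insert hi, sum_insert hi]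
    exact (h i (mem_insert_self i s)).add (ih fun j hj => h j (mem_insert_of_mem hj))

theorem tsum {ι : Type*} {F G : ι → E →L[ℂ] E} (h : ∀ i, IsCommutatorOf A (F i) (G i))
    (hF : Summable F) (hG : Summable G) :
    IsCommutatorOf A (∑' i, F i) (∑' i, G i) := fun x y => by
  have hsum : ∀ {S : ι → E →L[ℂ] E}, Summable S → ∀ u v : E,
      HasSum (fun i => inner ℂ u (S i v)) (inner ℂ u ((∑' i, S i) v)) := fun hS u v =>
    ((innerSL ℂ u).comp (ContinuousLinearMap.apply ℂ E v)).hasSum hS.hasSum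
  exact ((hsum hF _ _).sub (hsum hF _ _)).unique (by simpa only [h _ x y] using hsum hG _ _)

theorem star [CompleteSpace E] (h : IsCommutatorOf A B C) :
    IsCommutatorOf A (star B) (-star C) := fun x y => by
  have h' := congrArg (starRingEnd ℂ) (h y x)
  simp only [map_sub, inner_conj_symm, ContinuousLinearMap.star_eq_adjoint, neg_apply,
    inner_neg_right, ← ContinuousLinearMap.adjoint_inner_right] at h' ⊢
  linear_combination -h'

theorem mul [CompleteSpace E] (hA : IsSelfAdjoint A) (hB : IsCommutatorOf A B B₁)
    (hC : IsCommutatorOf A C C₁) : IsCommutatorOf A (B * C) (B₁ * C + B * C₁) := fun x y => by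
  obtain ⟨hCy, hACy⟩ := hA.exists_mem_domain_apply_eq (z := C y) (w := C (A y) + C₁ y)
    fun x => by rw [inner_add_right, ← hC x y]; ring
  have hB' := hB x ⟨C y, hCy⟩
  rw [hACy] at hB'
  simp only [mul_apply_eq_comp, add_apply, map_add, inner_add_right] at hB' ⊢
  linear_combination hB'

theorem unique [CompleteSpace E] (hA : IsSelfAdjoint A) {C' : E →L[ℂ] E}
    (h : IsCommutatorOf A B C) (h' : IsCommutatorOf A B C') : C = C' := by
  have hd := hA.dense_domain
  have hy : ∀ y : A.domain, C y = C' y := fun y =>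
    hd.eq_of_inner_right ℂ fun v hv => by rw [← h ⟨v, hv⟩ y, ← h' ⟨v, hv⟩ y]
  exact ContinuousLinearMap.ext fun x =>
    congrFun (Continuous.ext_on hd C.continuous C'.continuous fun z hz => hy ⟨z, hz⟩) x

end IsCommutatorOf

end Commutator

section Leibniz

variable {R : Type*}

noncomputable def leibnizChain [Semiring R] (F G : ℕ → R) (j : ℕ) : R :=
  ∑ ij ∈ antidiagonal j, j.choose ij.1 • (F ij.1 * G ij.2)

theorem leibnizChain_succ [Semiring R] (F G : ℕ → R) (j : ℕ) :
    leibnizChain F G (j + 1) =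
      ∑ ij ∈ antidiagonal j, j.choose ij.1 • (F (ij.1 + 1) * G ij.2 + F ij.1 * G (ij.2 + 1)) := by
  rw [leibnizChain, sum_antidiagonal_choose_succ_nsmul (fun i l => F i * G l), add_comm,
    ← sum_add_distrib]
  refine sum_congr rfl fun ij hij => ?_
  rw [Nat.choose_symm_of_eq_add (mem_antidiagonal.mp hij).symm, smul_add]

theorem norm_leibnizChain_le [SeminormedRing R] {F G : ℕ → R} {j : ℕ} {a b : ℝ}
    (hF : ∀ i ≤ j, ‖F i‖ ≤ a ^ i) (hG : ∀ i ≤ j, ‖G i‖ ≤ b ^ i) :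
    ‖leibnizChain F G j‖ ≤ (a + b) ^ j := by
  rw [(Commute.all a b).add_pow']
  refine (norm_sum_le _ _).trans (sum_le_sum fun ij hij => ?_)
  have hij := mem_antidiagonal.mp hij
  have hFi := hF ij.1 (by omega)
  refine norm_nsmul_le.trans ?_
  rw [nsmul_eq_mul]
  gcongr
  exact (norm_mul_le _ _).trans <|
    mul_le_mul hFi (hG ij.2 (by omega)) (norm_nonneg _) ((norm_nonneg _).trans hFi)

end Leibniz

namespace IsAdChain

variable {E : Type} [NormedAddCommGroup E] [InnerProductSpace ℂ E] {A : E →ₗ.[ℂ] E}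
  {B C : E →L[ℂ] E} {F G : ℕ → E →L[ℂ] E} {k : ℕ}

theorem eq_of_le [CompleteSpace E] (hA : IsSelfAdjoint A) (hF : IsAdChain A B F k)
    (hG : IsAdChain A B G k) : ∀ j ≤ k, F j = G j := by
  intro j
  induction j with
  | zero => exact fun _ => hF.1.trans hG.1.symm
  | succ j ih =>
    intro hj
    exact (hF.2 j hj).unique hA ((ih (by omega)).symm ▸ hG.2 j hj)

theorem smul (hF : IsAdChain A B F k) (a : ℂ) : IsAdChain A (a • B) (a • F) k :=
  ⟨by simp [hF.1], fun j hj => (hF.2 j hj).smul a⟩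

theorem tsum {ι : Type*} {B : ι → E →L[ℂ] E} {F : ι → ℕ → E →L[ℂ] E}
    (h : ∀ i, IsAdChain A (B i) (F i) k) (hF : ∀ j ≤ k, Summable fun i => F i j) :
    IsAdChain A (∑' i, B i) (fun j => ∑' i, F i j) k :=
  ⟨tsum_congr fun i => (h i).1, fun j hj =>
    IsCommutatorOf.tsum (fun i => (h i).2 j hj) (hF j hj.le) (hF (j + 1) hj)⟩

theorem one [CompleteSpace E] (hA : IsSelfAdjoint A) : IsAdChain A 1 (Pi.single 0 1) k := by
  refine ⟨Pi.single_eq_same _ _, fun j _ => ?_⟩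
  rcases j with _ | j
  · simpa using IsCommutatorOf.one hA
  · simpa using IsCommutatorOf.zero

theorem star [CompleteSpace E] (hF : IsAdChain A B F k) :
    IsAdChain A (star B) (fun j => (-1 : ℂ) ^ j • star (F j)) k := by
  refine ⟨by simp [hF.1], fun j hj => ?_⟩
  simpa [pow_succ, mul_smul] using ((hF.2 j hj).star).smul ((-1 : ℂ) ^ j)

theorem mul [CompleteSpace E] (hA : IsSelfAdjoint A) (hF : IsAdChain A B F k)
    (hG : IsAdChain A C G k) : IsAdChain A (B * C) (leibnizChain F G) k := by
  refine ⟨by simp [leibnizChain, hF.1, hG.1], fun j hj => ?_⟩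
  rw [leibnizChain_succ]
  refine IsCommutatorOf.sum fun ij hij => ((hF.2 ij.1 ?_).mul hA (hG.2 ij.2 ?_)).nsmul _ <;>
    · have := mem_antidiagonal.mp hij; omega

theorem exists_pow_norm_le [CompleteSpace E] (hA : IsSelfAdjoint A) (hF : IsAdChain A B F k)
    {M : ℝ} (hFM : ∀ i ≤ k, ‖F i‖ ≤ M ^ i) (n : ℕ) :
    ∃ G, IsAdChain A (B ^ n) G k ∧ ∀ j ≤ k, ‖G j‖ ≤ (n * M) ^ j := by
  induction n with
  | zero =>
    refine ⟨Pi.single 0 1, by simpa using one hA, fun j _ => ?_⟩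
    rcases j with _ | j
    · simpa [ContinuousLinearMap.one_def] using ContinuousLinearMap.norm_id_le
    · simp
  | succ n ih =>
    obtain ⟨G, hG, hGM⟩ := ih
    refine ⟨leibnizChain G F, pow_succ B n ▸ hG.mul hA hF, fun j hj => ?_⟩
    have := norm_leibnizChain_le (fun i hi => hGM i (hi.trans hj)) (fun i hi => hFM i (hi.trans hj))
    convert this using 2
    push_cast
    ring

theorem exists_zpow_norm_le [CompleteSpace E] (hA : IsSelfAdjoint A) {U : unitary (E →L[ℂ] E)}
    (hU : IsAdChain A U F k) {M : ℝ} (hFM : ∀ i ≤ k, ‖F i‖ ≤ M ^ i) (m : ℤ) :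
    ∃ G, IsAdChain A ↑(U ^ m) G k ∧ ∀ j ≤ k, ‖G j‖ ≤ (|(m : ℝ)| * M) ^ j := by
  rcases m with n | n
  · simpa using hU.exists_pow_norm_le hA hFM n
  · have hstar : ∀ i ≤ k, ‖(-1 : ℂ) ^ i • Star.star (F i)‖ ≤ M ^ i := fun i hi => by
      simpa [norm_smul] using hFM i hi
    obtain ⟨G, hG, hGM⟩ := hU.star.exists_pow_norm_le hA hstar (n + 1)
    refine ⟨G, ?_, ?_⟩
    · rwa [zpow_negSucc, ← Unitary.star_eq_inv, Unitary.coe_star, SubmonoidClass.coe_pow,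
        star_pow]
    · simpa only [Int.cast_negSucc, abs_neg, Nat.abs_cast] using hGM

end IsAdChain

section Fourier

open Real Complex

theorem norm_fourierCoeffOn_le {a b : ℝ} (hab : a < b) (f : ℝ → ℂ) (n : ℤ) :
    ‖fourierCoeffOn hab f n‖ ≤ 1 / (b - a) * ∫ x in a..b, ‖f x‖ := by
  have hba : 0 < b - a := sub_pos.2 hab
  rw [fourierCoeffOn_eq_integral, norm_smul, Real.norm_of_nonneg (by positivity)]
  gcongr
  refine (intervalIntegral.norm_integral_le_integral_norm hab.le).trans_eq ?_
  refine intervalIntegral.integral_congr fun x _ => ?_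
  simp only [norm_smul, fourier_apply, Circle.norm_coe, one_mul]

theorem fourierCoeffOn_deriv_of_periodic {T : ℝ} (hT : 0 < T) {ψ : ℝ → ℂ}
    (hper : Function.Periodic ψ T) (hψ : Differentiable ℝ ψ)
    (hψ' : IntervalIntegrable (deriv ψ) MeasureTheory.volume 0 T) {n : ℤ} (hn : n ≠ 0) :
    fourierCoeffOn hT (deriv ψ) n = 2 * π * I * n / T * fourierCoeffOn hT ψ n := by
  have h := fourierCoeffOn_of_hasDerivAt hT hn (fun x _ => (hψ x).hasDerivAt) hψ'
  rw [show ψ T = ψ 0 by simpa using hper 0, sub_self, mul_zero, zero_sub,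
    ofReal_zero, sub_zero] at h
  have hT' : (T : ℂ) ≠ 0 := ofReal_ne_zero.2 hT.ne'
  rw [h]
  field_simp

theorem exists_norm_fourierCoeffOn_mul_pow_le {T : ℝ} (hT : 0 < T) {d : ℕ} {ψ : ℝ → ℂ}
    (hper : Function.Periodic ψ T) (hψ : ContDiff ℝ d ψ) :
    ∃ K, ∀ n : ℤ, ‖fourierCoeffOn hT ψ n‖ * |(n : ℝ)| ^ d ≤ K := by
  induction d generalizing ψ with
  | zero => exact ⟨_, fun n => by simpa using norm_fourierCoeffOn_le hT ψ n⟩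
  | succ d ih =>
    rw [Nat.cast_add_one, contDiff_succ_iff_deriv] at hψ
    obtain ⟨hdiff, -, hψ'⟩ := hψ
    have hper' : Function.Periodic (deriv ψ) T := fun x => by
      rw [← deriv_comp_add_const, hper.funext]
    obtain ⟨K, hK⟩ := ih hper' hψ'
    have hK0 : 0 ≤ K := (by positivity : (0 : ℝ) ≤ _).trans (hK 0)
    refine ⟨T / (2 * π) * K, fun n => ?_⟩
    rcases eq_or_ne n 0 with rfl | hn
    · simpa using mul_nonneg (by positivity : 0 ≤ T / (2 * π)) hK0
    have h := congrArg norm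
      (fourierCoeffOn_deriv_of_periodic hT hper hdiff (hψ'.continuous.intervalIntegrable _ _) hn)
    simp only [norm_mul, norm_div, Complex.norm_ofNat, norm_real, norm_I, norm_intCast,
      Real.norm_eq_abs, abs_of_pos pi_pos, abs_of_pos hT, mul_one] at h
    calc ‖fourierCoeffOn hT ψ n‖ * |(n : ℝ)| ^ (d + 1)
        = T / (2 * π) * (‖fourierCoeffOn hT (deriv ψ) n‖ * |(n : ℝ)| ^ d) := by
          rw [h, pow_succ]; field_simp
      _ ≤ T / (2 * π) * K := by gcongr; exact hK n

theorem fourierCoeffOn_two_pi_eq_integral (φ : ℝ → ℂ) (n : ℤ) :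
    fourierCoeffOn two_pi_pos φ n =
      1 / (2 * π) * ∫ θ in 0..2 * π, φ θ * exp (-I * n * θ) := by
  rw [fourierCoeffOn_eq_integral, sub_zero, real_smul]
  congr 1
  · push_cast; ring
  refine intervalIntegral.integral_congr fun θ _ => ?_
  rw [fourier_coe_apply, smul_eq_mul, mul_comm]
  congr 2
  push_cast
  field_simp

end Fourier

theorem summable_smul_of_norm_mul_pow_le {F : Type*} [NormedAddCommGroup F] [NormedSpace ℂ F]
    [CompleteSpace F] {c : ℤ → ℂ} {f : ℤ → F} {j : ℕ} {K M : ℝ} (hM : 0 ≤ M)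
    (hc : ∀ n : ℤ, ‖c n‖ * |(n : ℝ)| ^ (j + 2) ≤ K) (hf : ∀ n : ℤ, ‖f n‖ ≤ (|(n : ℝ)| * M) ^ j) :
    Summable fun n => c n • f n := by
  refine Summable.of_norm_bounded_eventually
    ((Real.summable_one_div_int_pow.2 one_lt_two).mul_left (K * M ^ j)) ?_
  filter_upwards [Filter.eventually_cofinite_ne 0] with n hn
  rw [mul_one_div, le_div_iff₀ (by positivity)]
  calc ‖c n • f n‖ * (n : ℝ) ^ 2 ≤ ‖c n‖ * (|(n : ℝ)| * M) ^ j * (n : ℝ) ^ 2 := by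
        rw [norm_smul]; gcongr; exact hf n
    _ = ‖c n‖ * |(n : ℝ)| ^ (j + 2) * M ^ j := by rw [mul_pow, ← sq_abs]; ring
    _ ≤ K * M ^ j := by gcongr; exact hc n

theorem exists_norm_le_pow {F : Type*} [SeminormedAddCommGroup F] {f : ℕ → F} (h0 : ‖f 0‖ ≤ 1)
    (k : ℕ) : ∃ M, 0 ≤ M ∧ ∀ i ≤ k, ‖f i‖ ≤ M ^ i := by
  have hsum : 0 ≤ ∑ i ∈ range (k + 1), ‖f i‖ := by positivity
  refine ⟨1 + ∑ i ∈ range (k + 1), ‖f i‖, by positivity, fun i hi => ?_⟩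
  rcases i with _ | i
  · simpa using h0
  have hi : ‖f (i + 1)‖ ≤ ∑ i ∈ range (k + 1), ‖f i‖ :=
    single_le_sum (fun i _ => norm_nonneg (f i)) (mem_range.2 (by omega))
  exact (hi.trans (le_add_of_nonneg_left zero_le_one)).trans
    (le_self_pow₀ (le_add_of_nonneg_right hsum) i.succ_ne_zero)

/-- Let `U` be unitary of class `C^k(A)` and let `Φ` be of class `C^{k+2}` on the unit
circle, encoded by the `2π`-periodic function `φ(θ) = Φ(e^{iθ})` of class `C^{k+2}`,
with Fourier coefficients `c m = (1/2π)∫_0^{2π} φ(θ)e^{−imθ}dθ`.  Then the series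
`Σ_m c m • U^m` converges in operator norm; its sum `Φ(U)` belongs to `C^k(A)`, and for
every `j ≤ k`, `ad_A^j(Φ(U)) = Σ_m c m • ad_A^j(U^m)`, the series converging in
operator norm. -/
theorem stmt_12 (A : H →ₗ.[ℂ] H) (hA : IsSelfAdjoint A) (k : ℕ)
    (U : unitary (H →L[ℂ] H)) (D : ℕ → H →L[ℂ] H)
    (hD : IsAdChain A (U : H →L[ℂ] H) D k)
    (φ : ℝ → ℂ) (hper : Function.Periodic φ (2 * Real.pi))
    (hsmooth : ContDiff ℝ (k + 2 : ℕ) φ)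
    (c : ℤ → ℂ)
    (hc : ∀ m : ℤ, c m = (1 / (2 * Real.pi) : ℂ) *
      ∫ θ in (0:ℝ)..(2 * Real.pi), φ θ * Complex.exp (-Complex.I * (m : ℂ) * (θ : ℂ))) :
    Summable (fun m : ℤ => c m • ((U ^ m : unitary (H →L[ℂ] H)) : H →L[ℂ] H)) ∧
    (∃ E : ℤ → ℕ → H →L[ℂ] H,
      ∀ m : ℤ, IsAdChain A ((U ^ m : unitary (H →L[ℂ] H)) : H →L[ℂ] H) (E m) k) ∧
    (∀ E : ℤ → ℕ → H →L[ℂ] H,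
      (∀ m : ℤ, IsAdChain A ((U ^ m : unitary (H →L[ℂ] H)) : H →L[ℂ] H) (E m) k) →
        (∀ j ≤ k, Summable (fun m : ℤ => c m • E m j)) ∧
        IsAdChain A (∑' m : ℤ, c m • ((U ^ m : unitary (H →L[ℂ] H)) : H →L[ℂ] H))
          (fun j => ∑' m : ℤ, c m • E m j) k) := by
  have hU : ‖(U : H →L[ℂ] H)‖ ≤ 1 := by
    simpa using (CStarRing.norm_coe_unitary_mul U 1).trans_le ContinuousLinearMap.norm_id_le
  obtain ⟨M, hM, hDM⟩ := exists_norm_le_pow (hD.1 ▸ hU) k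
  choose E₀ hE₀ hE₀M using hD.exists_zpow_norm_le hA hDM
  have hsum : ∀ E : ℤ → ℕ → H →L[ℂ] H, (∀ m, IsAdChain A ↑(U ^ m) (E m) k) →
      ∀ j ≤ k, Summable fun m => c m • E m j := by
    intro E hE j hj
    obtain ⟨K, hK⟩ := exists_norm_fourierCoeffOn_mul_pow_le Real.two_pi_pos hper
      (hsmooth.of_le (by norm_cast; omega) : ContDiff ℝ (j + 2 : ℕ) φ)
    refine summable_smul_of_norm_mul_pow_le (j := j) (K := K) hM (fun m => ?_) fun m => ?_
    · simpa only [hc, ← fourierCoeffOn_two_pi_eq_integral] using hK m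
    · exact (hE m).eq_of_le hA (hE₀ m) j hj ▸ hE₀M m j hj
  refine ⟨(hsum E₀ hE₀ 0 k.zero_le).congr fun m => by rw [(hE₀ m).1], ⟨E₀, hE₀⟩,
    fun E hE => ⟨hsum E hE, IsAdChain.tsum (fun m => (hE m).smul (c m)) (hsum E hE)⟩⟩
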